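/- O(1/k^γ) iteration complexity of v-iBPG: under the standing assumptions and the restricted relative smoothness exponent assumption, if Σ_k θ_k^{1−γ}·η_k·(‖z̃^{k+1}‖+1) < ∞, Σ_k μ_k < ∞, Σ_k θ_k^{1−γ}·ν_k < ∞, and the problem inf{F(x) : x ∈ Q} has an optimal solution x* ∈ dom φ, then there exists a constant C ≥ 0 such that F(x^k) − F* ≤ C/k^γ for all k ≥ 1. -/

import Mathlib

open Filter Topology RealInnerProductSpace

/-- The Bregman distance associated with the kernel `φ` whose gradient map is `gφ`. -/
noncomputable def breg {E : Type*} [NormedAddCommGroup E] [InnerProductSpace ℝ E]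
    (φ : E → ℝ) (gφ : E → E) (x y : E) : ℝ :=
  φ x - φ y - ⟪gφ y, x - y⟫

/-- The ν-subdifferential of `P` (a proper function with effective domain `domP`) at `x`. -/
def nuSubdiff {E : Type*} [NormedAddCommGroup E] [InnerProductSpace ℝ E]
    (P : E → ℝ) (domP : Set E) (ν : ℝ) (x : E) : Set E :=
  {d : E | ∀ u ∈ domP, P x + ⟪d, u - x⟫ - ν ≤ P u}

open Classical in
/-- Extension of a real-valued function with effective domain `dom` to an `EReal`-valued
function taking the value `⊤` outside `dom`. -/
noncomputable def extFun {E : Type*} (g : E → ℝ) (dom : Set E) : E → EReal :=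
  fun x => if x ∈ dom then (g x : EReal) else ⊤

/-- `φ` (with effective domain `domφ` and gradient map `gφ`) is essentially smooth. -/
def EssentiallySmooth {E : Type*} [NormedAddCommGroup E] [InnerProductSpace ℝ E]
    [FiniteDimensional ℝ E] (φ : E → ℝ) (domφ : Set E) (gφ : E → E) : Prop :=
  (interior domφ).Nonempty ∧
  (∀ x ∈ interior domφ, HasGradientAt φ (gφ x) x) ∧
  ∀ (u : ℕ → E) (u₀ : E), (∀ n, u n ∈ interior domφ) →
    Tendsto u atTop (𝓝 u₀) → u₀ ∈ frontier (interior domφ) →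
    Tendsto (fun n => ‖gφ (u n)‖) atTop atTop

/-- The standing assumptions (Assumption A) for the problem `inf {P x + f x : x ∈ Q}`. -/
structure Standing {E : Type*} [NormedAddCommGroup E] [InnerProductSpace ℝ E]
    [FiniteDimensional ℝ E] (Q domφ domP domf X : Set E)
    (φ P f : E → ℝ) (gφ gf : E → E) (L : ℝ) : Prop where
  hQclosed : IsClosed Q
  hQconv : Convex ℝ Q
  hQint : (interior Q).Nonempty
  hφconv : ConvexOn ℝ domφ φ
  hφstrict : StrictConvexOn ℝ (interior domφ) φ
  hφsmooth : EssentiallySmooth φ domφ gφ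
  hφQ : closure domφ = Q
  hPne : domP.Nonempty
  hPconv : ConvexOn ℝ domP P
  hPclosed : LowerSemicontinuous (extFun P domP)
  hPQ : (domP ∩ interior Q).Nonempty
  hfconv : ConvexOn ℝ domf f
  hfclosed : LowerSemicontinuous (extFun f domf)
  hfdom : domφ ⊆ domf
  hfgrad : ∀ x ∈ interior domφ, HasGradientAt f (gf x) x
  hXclosed : IsClosed X
  hXconv : Convex ℝ X
  hXsup : domP ∩ domφ ⊆ X
  hLnn : 0 ≤ L
  hrel : ∀ u ∈ interior domφ ∩ X, ∀ v ∈ domφ ∩ X,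
    f v ≤ f u + ⟪gf u, v - u⟫ + L * breg φ gφ v u

/-- Conditions on the inertial parameter sequence `{θ_k}` (with `θ_{−1} = θ_0 = 1`; the
sequence is represented over `ℕ`, using truncated subtraction so that `θ (k-1)` at `k = 0`
stands for `θ_{−1} = 1`): `θ_k ∈ (0,1]`, `θ_k ≤ (α−1)/(k+α−1)` for all `k ≥ 1`, where
`α ≥ γ+1`, and `ϑ_k := θ_{k−1}^{−γ} − (1−θ_k)·θ_k^{−γ} ≥ 0` for all `k ≥ 1`. -/
def ThetaSeq (γ α : ℝ) (θ : ℕ → ℝ) : Prop :=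
  θ 0 = 1 ∧ (∀ k, θ k ∈ Set.Ioc (0:ℝ) 1) ∧ γ + 1 ≤ α ∧
  (∀ k : ℕ, 1 ≤ k → θ k ≤ (α - 1) / ((k : ℝ) + α - 1)) ∧
  (∀ k : ℕ, 1 ≤ k → 0 ≤ (θ (k-1)) ^ (-γ) - (1 - θ k) * (θ k) ^ (-γ))

/-- The restricted relative smoothness exponent assumption (Assumption C): there are `τ > 0`
and `γ ≥ 1` such that
`D_f((1−θ)x + θz̃, (1−θ)x + θz) ≤ τ L θ^γ D_φ(z̃, z)` for all `x, z̃ ∈ dom P ∩ dom φ`,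
`z ∈ int dom φ ∩ X` and `θ ∈ (0,1]`. -/
def RestrictedRelSmoothExponent {E : Type*} [NormedAddCommGroup E] [InnerProductSpace ℝ E]
    (domφ domP X : Set E) (φ f : E → ℝ) (gφ gf : E → E) (L τ γ : ℝ) : Prop :=
  0 < τ ∧ 1 ≤ γ ∧
  ∀ xx ∈ domP ∩ domφ, ∀ zt ∈ domP ∩ domφ, ∀ z ∈ interior domφ ∩ X, ∀ θ : ℝ,
    θ ∈ Set.Ioc (0:ℝ) 1 →
    breg f gf ((1 - θ) • xx + θ • zt) ((1 - θ) • xx + θ • z) ≤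
      τ * L * θ ^ γ * breg φ gφ zt z

/-- The v-iBPG iterates with parameter sequence `θ` and inexactness tolerance sequences
`η`, `μ`, `ν`. -/
structure VIBPGIter {E : Type*} [NormedAddCommGroup E] [InnerProductSpace ℝ E]
    [FiniteDimensional ℝ E] (domφ domP X : Set E) (φ P : E → ℝ) (gφ gf : E → E)
    (L τ γ : ℝ) (θ η μ ν : ℕ → ℝ) (x y z zt : ℕ → E) : Prop where
  hη : ∀ k, 0 ≤ η k
  hμ : ∀ k, 0 ≤ μ k
  hν : ∀ k, 0 ≤ ν k
  hx0 : x 0 ∈ domP ∩ domφ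
  hy : ∀ k, y k = (1 - θ k) • x k + θ k • z k
  hz : ∀ k, z k ∈ X ∩ interior domφ
  hzt : ∀ k, zt (k+1) ∈ domP ∩ domφ
  hinex : ∀ k, ∃ d ∈ nuSubdiff P domP (ν k) (zt (k+1)),
    ‖d + gf (y k) + (τ * L * θ k ^ (γ - 1)) • (gφ (z (k+1)) - gφ (z k))‖ ≤ η k
  hdist : ∀ k, breg φ gφ (zt (k+1)) (z (k+1)) ≤ μ k
  hxrec : ∀ k, x (k+1) = (1 - θ k) • x k + θ k • zt (k+1)

/-!
A Lyapunov argument. Convexity of `P` together with the inexact `ν`-subgradient `d`, the gradient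
inequality for `f` at `y^k`, the exponent assumption for `D_f(x^{k+1}, y^k)` and the three-point
identity for `D_φ` give the one-step bound
`F(x^{k+1}) ≤ (1 − θ_k) F(x^k) + θ_k F(x*) + θ_k (η_k ‖z̃^{k+1} − x*‖ + ν_k)
  + τ L θ_k^γ (D_φ(x*, z^k) − D_φ(x*, z^{k+1}) + μ_k)`.
Multiplying by `θ_k^{−γ}` and using `ϑ_k ≥ 0`, the potential
`θ_{k−1}^{−γ} (F(x^k) − F*) + τ L D_φ(x*, z^k)` grows by at most a summable error per step, hence
stays bounded, and `θ_{k−1} ≤ (α − 1)/k` turns this into the rate `O(1/k^γ)`.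
-/

section Bregman

variable {E : Type*} [NormedAddCommGroup E] [InnerProductSpace ℝ E]

theorem breg_three_point (φ : E → ℝ) (gφ : E → E) (a b c w : E) :
    breg φ gφ a c - ⟪gφ b - gφ c, a - w⟫ =
      breg φ gφ w c - breg φ gφ w b + breg φ gφ a b := by
  simp only [breg, inner_sub_left, inner_sub_right]
  ring

theorem ConvexOn.le_of_mem_nuSubdiff {s : Set E} {P : E → ℝ} (hP : ConvexOn ℝ s P)
    {t ν : ℝ} (ht₀ : 0 ≤ t) (ht₁ : t ≤ 1) {x zt w d : E} (hx : x ∈ s) (hzt : zt ∈ s)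
    (hw : w ∈ s) (hd : d ∈ nuSubdiff P s ν zt) :
    P ((1 - t) • x + t • zt) ≤ (1 - t) * P x + t * (P w + ⟪d, zt - w⟫ + ν) := by
  have hconv := hP.2 hx hzt (sub_nonneg.2 ht₁) ht₀ (by ring)
  have hsub : P zt ≤ P w + ⟪d, zt - w⟫ + ν := by
    have := hd w hw
    rw [← neg_sub zt w, inner_neg_right] at this
    linarith
  simp only [smul_eq_mul] at hconv
  nlinarith

variable [CompleteSpace E]

theorem ConvexOn.add_inner_sub_le_of_hasGradientAt {s : Set E} {h : E → ℝ} {g u v : E}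
    (hh : ConvexOn ℝ s h) (hu : u ∈ s) (hv : v ∈ s) (hg : HasGradientAt h g u) :
    h u + ⟪g, v - u⟫ ≤ h v := by
  set ℓ : ℝ →ᵃ[ℝ] E := AffineMap.lineMap u v
  have hderiv : HasDerivAt (h ∘ ℓ) ⟪g, v - u⟫ 0 := by
    have hg' : HasFDerivAt h (InnerProductSpace.toDual ℝ E g) (ℓ 0) := by
      simpa [ℓ] using hg.hasFDerivAt
    simpa [ℓ, InnerProductSpace.toDual_apply_apply] using
      hg'.comp_hasDerivAt (0 : ℝ) AffineMap.hasDerivAt_lineMap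
  have := (hh.comp_affineMap ℓ).le_slope_of_hasDerivAt (x := 0) (y := 1)
    (by simpa [ℓ]) (by simpa [ℓ]) one_pos hderiv
  simp only [slope, sub_zero, inv_one, Function.comp_apply, AffineMap.lineMap_apply_one,
    AffineMap.lineMap_apply_zero, vsub_eq_sub, smul_eq_mul, one_mul, ℓ] at this
  linarith

theorem breg_nonneg {s : Set E} {φ : E → ℝ} {gφ : E → E} {x y : E} (hφ : ConvexOn ℝ s φ)
    (hx : x ∈ s) (hy : y ∈ s) (hg : HasGradientAt φ (gφ y) y) : 0 ≤ breg φ gφ x y := by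
  have := hφ.add_inner_sub_le_of_hasGradientAt hy hx hg
  unfold breg
  linarith

theorem ConvexOn.le_add_inner_add_breg {s : Set E} {f : E → ℝ} {gf : E → E}
    (hf : ConvexOn ℝ s f) {t : ℝ} (ht₀ : 0 ≤ t) (ht₁ : t ≤ 1) {x z zt w : E} (hx : x ∈ s)
    (hw : w ∈ s) (hy : (1 - t) • x + t • z ∈ s)
    (hgrad : HasGradientAt f (gf ((1 - t) • x + t • z)) ((1 - t) • x + t • z)) :
    f ((1 - t) • x + t • zt) ≤ (1 - t) * f x + t * f w
      + t * ⟪gf ((1 - t) • x + t • z), zt - w⟫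
      + breg f gf ((1 - t) • x + t • zt) ((1 - t) • x + t • z) := by
  set y := (1 - t) • x + t • z
  set v := (1 - t) • x + t • w
  have hgrad_ineq := hf.add_inner_sub_le_of_hasGradientAt hy
    (hf.1 hx hw (sub_nonneg.2 ht₁) ht₀ (by ring)) hgrad
  have hconv : f v ≤ (1 - t) * f x + t * f w := hf.2 hx hw (sub_nonneg.2 ht₁) ht₀ (by ring)
  have hinner : ⟪gf y, (1 - t) • x + t • zt - y⟫ = ⟪gf y, v - y⟫ + t * ⟪gf y, zt - w⟫ := by
    rw [← real_inner_smul_right, ← inner_add_right]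
    congr 1
    simp only [y, v]
    module
  unfold breg
  linarith

end Bregman

theorem ThetaSeq.one_sub_mul_rpow_neg_le {γ α : ℝ} {θ : ℕ → ℝ} (hθ : ThetaSeq γ α θ) (k : ℕ) :
    (1 - θ k) * θ k ^ (-γ) ≤ θ (k - 1) ^ (-γ) := by
  rcases Nat.eq_zero_or_pos k with rfl | hk
  · simp [hθ.1]
  · linarith [hθ.2.2.2.2 k hk]

theorem ThetaSeq.rpow_pred_le {γ α : ℝ} {θ : ℕ → ℝ} (hθ : ThetaSeq γ α θ) (hγ : 1 ≤ γ)
    {k : ℕ} (hk : 1 ≤ k) : θ (k - 1) ^ γ ≤ (α - 1) ^ γ / (k : ℝ) ^ γ := by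
  obtain ⟨hθ₀, hθmem, hα, hθle, -⟩ := hθ
  have hkpos : (0 : ℝ) < k := by exact_mod_cast hk
  have hpred : θ (k - 1) ≤ (α - 1) / k := by
    rcases hk.eq_or_lt with rfl | hk
    · simp only [Nat.sub_self, hθ₀, Nat.cast_one, div_one]
      linarith
    · calc θ (k - 1) ≤ (α - 1) / (((k - 1 : ℕ) : ℝ) + α - 1) := hθle _ (by omega)
        _ ≤ (α - 1) / k := by
          rw [Nat.cast_sub hk.le, Nat.cast_one]
          exact div_le_div_of_nonneg_left (by linarith) hkpos (by linarith)
  rw [← Real.div_rpow (by linarith) hkpos.le]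
  exact Real.rpow_le_rpow (hθmem _).1.le hpred (by linarith)

namespace VIBPGIter

variable {E : Type*} [NormedAddCommGroup E] [InnerProductSpace ℝ E] [FiniteDimensional ℝ E]
  {Q domφ domP domf X : Set E} {φ P f : E → ℝ} {gφ gf : E → E} {L τ γ α : ℝ}
  {θ η μ ν : ℕ → ℝ} {x y z zt : ℕ → E}

theorem x_mem (hiter : VIBPGIter domφ domP X φ P gφ gf L τ γ θ η μ ν x y z zt)
    (hP : Convex ℝ domP) (hφ : Convex ℝ domφ) (hθ : ∀ k, θ k ∈ Set.Ioc 0 1) (k : ℕ) :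
    x k ∈ domP ∩ domφ := by
  induction k with
  | zero => exact hiter.hx0
  | succ k ih =>
    rw [hiter.hxrec k]
    exact (hP.inter hφ) ih (hiter.hzt k) (sub_nonneg.2 (hθ k).2) (hθ k).1.le (by ring)

theorem y_mem_interior (hiter : VIBPGIter domφ domP X φ P gφ gf L τ γ θ η μ ν x y z zt)
    (hφ : Convex ℝ domφ) (hθ : ∀ k, θ k ∈ Set.Ioc 0 1) {k : ℕ} (hx : x k ∈ domφ) :
    y k ∈ interior domφ := by
  rw [hiter.hy k]
  exact hφ.combo_self_interior_mem_interior hx (hiter.hz k).2 (sub_nonneg.2 (hθ k).2)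
    (hθ k).1 (by ring)

theorem objective_succ_le (hstand : Standing Q domφ domP domf X φ P f gφ gf L)
    (hrrse : RestrictedRelSmoothExponent domφ domP X φ f gφ gf L τ γ)
    (hiter : VIBPGIter domφ domP X φ P gφ gf L τ γ θ η μ ν x y z zt)
    (hθ : ∀ k, θ k ∈ Set.Ioc 0 1) {w : E} (hw : w ∈ domP ∩ domφ) (k : ℕ) :
    P (x (k + 1)) + f (x (k + 1)) ≤ (1 - θ k) * (P (x k) + f (x k)) + θ k * (P w + f w)
      + θ k * (η k * ‖zt (k + 1) - w‖ + ν k)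
      + τ * L * θ k ^ γ * (breg φ gφ w (z k) - breg φ gφ w (z (k + 1)) + μ k) := by
  obtain ⟨hθ₀, hθ₁⟩ := hθ k
  obtain ⟨d, hd, hΔ⟩ := hiter.hinex k
  have hx := hiter.x_mem hstand.hPconv.1 hstand.hφconv.1 hθ k
  have hy := hiter.y_mem_interior hstand.hφconv.1 hθ hx.2
  have hP := hstand.hPconv.le_of_mem_nuSubdiff hθ₀.le hθ₁ hx.1 (hiter.hzt k).1 hw.1 hd
  have hf := hstand.hfconv.le_add_inner_add_breg hθ₀.le hθ₁ (hstand.hfdom hx.2)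
    (hstand.hfdom hw.2) (zt := zt (k + 1)) (hstand.hfdom (interior_subset (hiter.hy k ▸ hy)))
    (hiter.hy k ▸ hstand.hfgrad _ hy)
  rw [← hiter.hxrec k] at hP
  rw [← hiter.hxrec k, ← hiter.hy k] at hf
  have hDf : breg f gf (x (k + 1)) (y k) ≤ τ * L * θ k ^ γ * breg φ gφ (zt (k + 1)) (z k) := by
    have := hrrse.2.2 (x k) hx (zt (k + 1)) (hiter.hzt k) (z k)
      ⟨(hiter.hz k).2, (hiter.hz k).1⟩ (θ k) (hθ k)
    rwa [← hiter.hxrec k, ← hiter.hy k] at this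
  set c := τ * L * θ k ^ (γ - 1)
  set Δ := d + gf (y k) + c • (gφ (z (k + 1)) - gφ (z k))
  have hθc : θ k * c = τ * L * θ k ^ γ := by
    rw [show γ = (γ - 1) + 1 by ring, Real.rpow_add_one hθ₀.ne']
    ring
  have hinner : ⟪d, zt (k + 1) - w⟫ + ⟪gf (y k), zt (k + 1) - w⟫ =
      ⟪Δ, zt (k + 1) - w⟫ - c * ⟪gφ (z (k + 1)) - gφ (z k), zt (k + 1) - w⟫ := by
    simp only [Δ, inner_add_left, real_inner_smul_left]
    ring
  have hΔw : θ k * ⟪Δ, zt (k + 1) - w⟫ ≤ θ k * (η k * ‖zt (k + 1) - w‖) :=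
    mul_le_mul_of_nonneg_left ((real_inner_le_norm _ _).trans
      (mul_le_mul_of_nonneg_right hΔ (norm_nonneg _))) hθ₀.le
  have hthree : τ * L * θ k ^ γ * (breg φ gφ (zt (k + 1)) (z k)
        - ⟪gφ (z (k + 1)) - gφ (z k), zt (k + 1) - w⟫) ≤
      τ * L * θ k ^ γ * (breg φ gφ w (z k) - breg φ gφ w (z (k + 1)) + μ k) := by
    rw [breg_three_point]
    exact mul_le_mul_of_nonneg_left (by linarith [hiter.hdist k])
      (mul_nonneg (mul_nonneg hrrse.1.le hstand.hLnn) (Real.rpow_nonneg hθ₀.le _))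
  linear_combination hP + hf + hDf + hΔw + hthree + θ k * hinner
    - ⟪gφ (z (k + 1)) - gφ (z k), zt (k + 1) - w⟫ * hθc

theorem potential_succ_le (hstand : Standing Q domφ domP domf X φ P f gφ gf L)
    (hrrse : RestrictedRelSmoothExponent domφ domP X φ f gφ gf L τ γ)
    (hiter : VIBPGIter domφ domP X φ P gφ gf L τ γ θ η μ ν x y z zt)
    (hθ : ThetaSeq γ α θ) {xstar : E} (hxstar : xstar ∈ domP ∩ domφ)
    (hopt : ∀ u ∈ domP ∩ domφ, P xstar + f xstar ≤ P u + f u) (k : ℕ) :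
    θ k ^ (-γ) * (P (x (k + 1)) + f (x (k + 1)) - (P xstar + f xstar))
        + τ * L * breg φ gφ xstar (z (k + 1)) ≤
      θ (k - 1) ^ (-γ) * (P (x k) + f (x k) - (P xstar + f xstar))
        + τ * L * breg φ gφ xstar (z k)
        + ((1 + ‖xstar‖) * (θ k ^ (1 - γ) * η k * (‖zt (k + 1)‖ + 1))
          + θ k ^ (1 - γ) * ν k + τ * L * μ k) := by
  have hθ₀ := (hθ.2.1 k).1
  have hstep := hiter.objective_succ_le hstand hrrse hθ.2.1 hxstar k
  have hgap : 0 ≤ P (x k) + f (x k) - (P xstar + f xstar) :=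
    sub_nonneg.2 (hopt _ (hiter.x_mem hstand.hPconv.1 hstand.hφconv.1 hθ.2.1 k))
  have hcoef := mul_le_mul_of_nonneg_right (hθ.one_sub_mul_rpow_neg_le k) hgap
  have hnorm : ‖zt (k + 1) - xstar‖ ≤ (1 + ‖xstar‖) * (‖zt (k + 1)‖ + 1) := by
    nlinarith [norm_sub_le (zt (k + 1)) xstar, norm_nonneg xstar, norm_nonneg (zt (k + 1))]
  have hdist := mul_le_mul_of_nonneg_left hnorm (hiter.hη k)
  have hpow : θ k ^ (-γ) * θ k = θ k ^ (1 - γ) := by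
    rw [← Real.rpow_add_one hθ₀.ne']
    ring_nf
  have hpow' : θ k ^ (-γ) * θ k ^ γ = 1 := by
    rw [← Real.rpow_add hθ₀]
    simp
  have hscaled := mul_le_mul_of_nonneg_left hstep (Real.rpow_nonneg hθ₀.le (-γ))
  have herr := mul_le_mul_of_nonneg_left hdist (Real.rpow_nonneg hθ₀.le (1 - γ))
  linear_combination hscaled + hcoef + herr
    + (η k * ‖zt (k + 1) - xstar‖ + ν k) * hpow
    + τ * L * (breg φ gφ xstar (z k) - breg φ gφ xstar (z (k + 1)) + μ k) * hpow'

theorem potential_le (hstand : Standing Q domφ domP domf X φ P f gφ gf L)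
    (hrrse : RestrictedRelSmoothExponent domφ domP X φ f gφ gf L τ γ)
    (hiter : VIBPGIter domφ domP X φ P gφ gf L τ γ θ η μ ν x y z zt)
    (hθ : ThetaSeq γ α θ) {xstar : E} (hxstar : xstar ∈ domP ∩ domφ)
    (hopt : ∀ u ∈ domP ∩ domφ, P xstar + f xstar ≤ P u + f u)
    (h1 : Summable (fun k : ℕ => θ k ^ (1 - γ) * η k * (‖zt (k + 1)‖ + 1)))
    (h2 : Summable μ) (h3 : Summable (fun k : ℕ => θ k ^ (1 - γ) * ν k)) (n : ℕ) :
    θ (n - 1) ^ (-γ) * (P (x n) + f (x n) - (P xstar + f xstar))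
        + τ * L * breg φ gφ xstar (z n) ≤
      P (x 0) + f (x 0) - (P xstar + f xstar) + τ * L * breg φ gφ xstar (z 0)
        + ∑' k, ((1 + ‖xstar‖) * (θ k ^ (1 - γ) * η k * (‖zt (k + 1)‖ + 1))
          + θ k ^ (1 - γ) * ν k + τ * L * μ k) := by
  set a : ℕ → ℝ := fun n => θ (n - 1) ^ (-γ) * (P (x n) + f (x n) - (P xstar + f xstar))
    + τ * L * breg φ gφ xstar (z n)
  set e : ℕ → ℝ := fun k => (1 + ‖xstar‖) * (θ k ^ (1 - γ) * η k * (‖zt (k + 1)‖ + 1))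
    + θ k ^ (1 - γ) * ν k + τ * L * μ k
  have he : ∀ k, 0 ≤ e k := fun k => by
    have := Real.rpow_nonneg (hθ.2.1 k).1.le (1 - γ)
    have := hiter.hη k
    have := hiter.hν k
    have := hiter.hμ k
    have := mul_nonneg hrrse.1.le hstand.hLnn
    positivity
  have hsum : ∑ k ∈ Finset.range n, e k ≤ ∑' k, e k :=
    (((h1.mul_left _).add h3).add (h2.mul_left _)).sum_le_tsum _ fun k _ => he k
  have hstep : ∑ k ∈ Finset.range n, (a (k + 1) - a k) ≤ ∑ k ∈ Finset.range n, e k :=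
    Finset.sum_le_sum fun k _ =>
      sub_le_iff_le_add'.2 (hiter.potential_succ_le hstand hrrse hθ hxstar hopt k)
  have ha₀ : a 0 = P (x 0) + f (x 0) - (P xstar + f xstar) + τ * L * breg φ gφ xstar (z 0) := by
    simp [a, hθ.1]
  rw [Finset.sum_range_sub] at hstep
  linarith

end VIBPGIter

/-- **O(1/k^γ) iteration complexity of v-iBPG** (Theorem 4.1(iii)). Under the standing
assumptions and the restricted relative smoothness exponent assumption, if
`Σ_k θ_k^{1−γ} η_k (‖z̃^{k+1}‖+1) < ∞`, `Σ_k μ_k < ∞`, `Σ_k θ_k^{1−γ} ν_k < ∞`, and the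
problem has an optimal solution `x* ∈ dom φ`, then there is `C ≥ 0` with
`F(x^k) − F* ≤ C/k^γ` for all `k ≥ 1`, where `F = P + f`. -/
theorem vIBPG_iteration_complexity
    {E : Type*} [NormedAddCommGroup E] [InnerProductSpace ℝ E] [FiniteDimensional ℝ E]
    (Q domφ domP domf X : Set E) (φ P f : E → ℝ) (gφ gf : E → E) (L τ γ α : ℝ)
    (hstand : Standing Q domφ domP domf X φ P f gφ gf L)
    (hrrse : RestrictedRelSmoothExponent domφ domP X φ f gφ gf L τ γ)
    (θ η μ ν : ℕ → ℝ) (hθ : ThetaSeq γ α θ)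
    (x y z zt : ℕ → E)
    (hiter : VIBPGIter domφ domP X φ P gφ gf L τ γ θ η μ ν x y z zt)
    (Fstar : ℝ) (hFstar : IsGLB ((fun u => P u + f u) '' (domP ∩ domf ∩ Q)) Fstar)
    (h1 : Summable (fun k : ℕ => θ k ^ (1 - γ) * η k * (‖zt (k+1)‖ + 1)))
    (h2 : Summable μ)
    (h3 : Summable (fun k : ℕ => θ k ^ (1 - γ) * ν k))
    (xstar : E) (hxstar : xstar ∈ domP ∩ domφ)
    (hopt : ∀ u ∈ domP ∩ domf ∩ Q, P xstar + f xstar ≤ P u + f u) :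
    ∃ C : ℝ, 0 ≤ C ∧ ∀ k : ℕ, 1 ≤ k →
      (P (x k) + f (x k)) - Fstar ≤ C / (k : ℝ) ^ γ := by
  have hfeas : ∀ u ∈ domP ∩ domφ, u ∈ domP ∩ domf ∩ Q := fun u hu =>
    ⟨⟨hu.1, hstand.hfdom hu.2⟩, hstand.hφQ ▸ subset_closure hu.2⟩
  have hopt' : ∀ u ∈ domP ∩ domφ, P xstar + f xstar ≤ P u + f u := fun u hu =>
    hopt u (hfeas u hu)
  have hleast : IsLeast ((fun u => P u + f u) '' (domP ∩ domf ∩ Q)) (P xstar + f xstar) :=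
    ⟨⟨xstar, hfeas xstar hxstar, rfl⟩, by rintro _ ⟨u, hu, rfl⟩; exact hopt u hu⟩
  obtain rfl := hleast.isGLB.unique hFstar
  set B := P (x 0) + f (x 0) - (P xstar + f xstar) + τ * L * breg φ gφ xstar (z 0)
    + ∑' k, ((1 + ‖xstar‖) * (θ k ^ (1 - γ) * η k * (‖zt (k + 1)‖ + 1))
      + θ k ^ (1 - γ) * ν k + τ * L * μ k)
  have hbound (k : ℕ) :
      θ (k - 1) ^ (-γ) * (P (x k) + f (x k) - (P xstar + f xstar)) ≤ B := by
    have hD := breg_nonneg hstand.hφconv hxstar.2 (interior_subset (hiter.hz k).2)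
      (hstand.hφsmooth.2.1 _ (hiter.hz k).2)
    have hτL := mul_nonneg hrrse.1.le hstand.hLnn
    linarith [mul_nonneg hτL hD, hiter.potential_le hstand hrrse hθ hxstar hopt' h1 h2 h3 k]
  have hB : 0 ≤ B := (mul_nonneg (Real.rpow_nonneg (hθ.2.1 _).1.le _)
    (sub_nonneg.2 (hopt' _ hiter.hx0))).trans (hbound 0)
  have hα : 0 ≤ α - 1 := by linarith [hθ.2.2.1, hrrse.2.1]
  refine ⟨(α - 1) ^ γ * B, mul_nonneg (Real.rpow_nonneg hα _) hB, fun k hk => ?_⟩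
  have hθk := (hθ.2.1 (k - 1)).1
  calc P (x k) + f (x k) - (P xstar + f xstar)
      = θ (k - 1) ^ γ * (θ (k - 1) ^ (-γ) * (P (x k) + f (x k) - (P xstar + f xstar))) := by
        rw [← mul_assoc, ← Real.rpow_add hθk, add_neg_cancel, Real.rpow_zero, one_mul]
    _ ≤ θ (k - 1) ^ γ * B := mul_le_mul_of_nonneg_left (hbound k) (Real.rpow_nonneg hθk.le _)
    _ ≤ (α - 1) ^ γ / (k : ℝ) ^ γ * B :=
        mul_le_mul_of_nonneg_right (hθ.rpow_pred_le hrrse.2.1 hk) hB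
    _ = (α - 1) ^ γ * B / (k : ℝ) ^ γ := by ring
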